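/- arXiv:1303.5259 — 7 statements merged into one kernel-verified Lean document; each statement's English description precedes it below -/
import Mathlib

section
/- Let M ⊆ ℝ^n be nonempty and permutation-invariant (i.e., for every permutation matrix P and every x ∈ M, Px ∈ M). Let x ∈ ℝ^n and let p be a Euclidean projection of x onto M (i.e., p ∈ M minimizes ‖p − x‖₂ over M). Then for all indices i, j, x_i > x_j implies p_i ≥ p_j. -/
noncomputable def l2 {n : ℕ} (x : Fin n → ℝ) : ℝ := Real.sqrt (∑ i, (x i) ^ 2)

theorem stmt_1 {n : ℕ} (M : Set (Fin n → ℝ)) (hM : M.Nonempty)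
    (hperm : ∀ τ : Equiv.Perm (Fin n), ∀ y ∈ M, (fun i => y (τ i)) ∈ M)
    (x p : Fin n → ℝ) (hp : p ∈ M)
    (hmin : ∀ z ∈ M, l2 (fun i => p i - x i) ≤ l2 (fun i => z i - x i))
    (i j : Fin n) (hij : x i > x j) : p i ≥ p j := by
  by_contra hlt
  push_neg at hlt
  have hne : i ≠ j := by rintro rfl; exact lt_irrefl _ hij
  set q : Fin n → ℝ := fun k => p (Equiv.swap i j k) with hq
  have hqM : q ∈ M := hperm (Equiv.swap i j) p hp
  have hqi : q i = p j := by simp [hq]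
  have hqj : q j = p i := by simp [hq]
  have hsum : ∑ k, (q k - x k) ^ 2 < ∑ k, (p k - x k) ^ 2 := by
    have key : ∑ k, ((q k - x k) ^ 2 - (p k - x k) ^ 2) < 0 := by
      have heq : ∑ k, ((q k - x k) ^ 2 - (p k - x k) ^ 2)
          = ∑ k ∈ ({i, j} : Finset (Fin n)), ((q k - x k) ^ 2 - (p k - x k) ^ 2) := by
        refine (Finset.sum_subset (Finset.subset_univ _) ?_).symm
        intro k _ hk
        simp only [Finset.mem_insert, Finset.mem_singleton, not_or] at hk
        have : q k = p k := by
          simp [hq, Equiv.swap_apply_of_ne_of_ne hk.1 hk.2]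
        rw [this]; ring
      rw [heq, Finset.sum_pair hne, hqi, hqj]
      nlinarith [hij, hlt]
    have := Finset.sum_sub_distrib (f := fun k => (q k - x k) ^ 2)
      (g := fun k => (p k - x k) ^ 2) (s := Finset.univ)
    linarith [key, this]
  have hl2 : l2 (fun k => q k - x k) < l2 (fun k => p k - x k) := by
    unfold l2
    exact Real.sqrt_lt_sqrt (Finset.sum_nonneg fun k _ => sq_nonneg _) hsum
  exact absurd (hmin q hqM) (not_le.mpr hl2)
end

section
/- Under the setting of the auxiliary function (x ∈ ℝ_{≥0}^n, q(α) = max(x − α·e, 0), ℓ₁ = ‖q‖₁, ℓ₂ = ‖q‖₂, Ψ = ℓ₁/ℓ₂ − λ₁/λ₂), on any open interval (x_j, x_k) between consecutive distinct entries of x, Ψ is differentiable with derivative Ψ'(α) = (1/ℓ₂(α)) · (ℓ₁(α)²/ℓ₂(α)² − d), where d is the (constant) number of indices i with x_i > α. -/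
/-! On an interval free of entries of `x`, the positive part `max (x - α) 0` is `x - α` on the
fixed set `S` of entries above the interval and `0` elsewhere. Hence `ℓ₁` and `ℓ₂` are there the
smooth functions `∑_{i ∈ S} (x i - α)` and `√(∑_{i ∈ S} (x i - α)²)`, with derivatives `-#S` and
`-ℓ₁/ℓ₂`, and the quotient rule gives `Ψ' = (-#S · ℓ₂ + ℓ₁²/ℓ₂) / ℓ₂²`. -/

noncomputable def l1 {n : ℕ} (x : Fin n → ℝ) : ℝ := ∑ i, |x i|
noncomputable def Psi {n : ℕ} (x : Fin n → ℝ) (lam1 lam2 α : ℝ) : ℝ :=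
  l1 (fun i => max (x i - α) 0) / l2 (fun i => max (x i - α) 0) - lam1 / lam2

open Finset Filter Topology

theorem hasDerivAt_sum_sub_div_sqrt_sum_sub_sq {ι : Type*} (x : ι → ℝ) (S : Finset ι) {α : ℝ}
    (hS : 0 < ∑ i ∈ S, (x i - α) ^ 2) :
    HasDerivAt (fun β => (∑ i ∈ S, (x i - β)) / √(∑ i ∈ S, (x i - β) ^ 2))
      (1 / √(∑ i ∈ S, (x i - α) ^ 2) *
        ((∑ i ∈ S, (x i - α)) ^ 2 / √(∑ i ∈ S, (x i - α) ^ 2) ^ 2 - #S)) α := by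
  have hsub : ∀ i, HasDerivAt (fun β => x i - β) (-1) α := fun i => by
    simpa using (hasDerivAt_id α).const_sub (x i)
  have hsum : HasDerivAt (fun β => ∑ i ∈ S, (x i - β)) (-#S) α := by
    simpa using HasDerivAt.fun_sum fun i _ => hsub i
  have hsq : HasDerivAt (fun β => ∑ i ∈ S, (x i - β) ^ 2) (-2 * ∑ i ∈ S, (x i - α)) α := by
    refine (HasDerivAt.fun_sum fun i (_ : i ∈ S) => (hsub i).fun_pow 2).congr_deriv ?_
    rw [mul_sum]
    exact sum_congr rfl fun i _ => by ring
  have hsqrt_pos : 0 < √(∑ i ∈ S, (x i - α) ^ 2) := Real.sqrt_pos.2 hS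
  refine (hsum.div (hsq.sqrt hS.ne') hsqrt_pos.ne').congr_deriv ?_
  field_simp
  rw [Real.sq_sqrt hS.le]
  ring

section PosPart

variable {n : ℕ} (x : Fin n → ℝ) {β c : ℝ}

theorem max_sub_zero_eq_ite (hβc : β ≤ c) (hgap : ∀ i, x i < c → x i ≤ β) (i : Fin n) :
    max (x i - β) 0 = if c ≤ x i then x i - β else 0 := by
  split_ifs with hi
  · exact max_eq_left (by linarith)
  · exact max_eq_right (by linarith [hgap i (not_le.1 hi)])

theorem l1_max_sub_zero_eq (hβc : β ≤ c) (hgap : ∀ i, x i < c → x i ≤ β) :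
    l1 (fun i => max (x i - β) 0) = ∑ i ∈ univ.filter (fun i => c ≤ x i), (x i - β) := by
  simp only [l1, max_sub_zero_eq_ite x hβc hgap, sum_filter]
  refine sum_congr rfl fun i _ => ?_
  split_ifs with hi
  · exact abs_of_nonneg (by linarith)
  · exact abs_zero

theorem l2_max_sub_zero_eq (hβc : β ≤ c) (hgap : ∀ i, x i < c → x i ≤ β) :
    l2 (fun i => max (x i - β) 0) = √(∑ i ∈ univ.filter (fun i => c ≤ x i), (x i - β) ^ 2) := by
  simp only [l2, max_sub_zero_eq_ite x hβc hgap, sum_filter, ite_pow, zero_pow two_ne_zero]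

end PosPart

theorem stmt_7_general {n : ℕ} (x : Fin n → ℝ)
    (lam1 lam2 : ℝ)
    (xj xk : ℝ)
    (hgap : ∀ i, ¬ (xj < x i ∧ x i < xk))
    (hbelow : ∃ i, xk < x i)
    (d : ℕ) (hd : d = (Finset.univ.filter (fun i => xk ≤ x i)).card) :
    ∀ α ∈ Set.Ioo xj xk,
      HasDerivAt (Psi x lam1 lam2)
        ((1 / l2 (fun i => max (x i - α) 0)) *
          ((l1 (fun i => max (x i - α) 0)) ^ 2 / (l2 (fun i => max (x i - α) 0)) ^ 2 - d)) α := by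
  intro α hα
  set S := univ.filter (fun i => xk ≤ x i)
  have hgap' : ∀ β ∈ Set.Ioo xj xk, ∀ i, x i < xk → x i ≤ β := fun β hβ i hi =>
    (not_lt.1 fun hji => hgap i ⟨hji, hi⟩).trans hβ.1.le
  have hpos : 0 < ∑ i ∈ S, (x i - α) ^ 2 := by
    obtain ⟨i, hi⟩ := hbelow
    refine sum_pos (fun j hj => ?_) ⟨i, mem_filter.2 ⟨mem_univ i, hi.le⟩⟩
    have : xk ≤ x j := (mem_filter.1 hj).2
    nlinarith [hα.2]
  have hPsi : Psi x lam1 lam2 =ᶠ[𝓝 α]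
      fun β => (∑ i ∈ S, (x i - β)) / √(∑ i ∈ S, (x i - β) ^ 2) - lam1 / lam2 := by
    filter_upwards [Ioo_mem_nhds hα.1 hα.2] with β hβ
    rw [Psi, l1_max_sub_zero_eq x hβ.2.le (hgap' β hβ), l2_max_sub_zero_eq x hβ.2.le (hgap' β hβ)]
  rw [l1_max_sub_zero_eq x hα.2.le (hgap' α hα), l2_max_sub_zero_eq x hα.2.le (hgap' α hα), hd]
  exact ((hasDerivAt_sum_sub_div_sqrt_sum_sub_sq x S hpos).sub_const _).congr_of_eventuallyEq hPsi

theorem stmt_7 {n : ℕ} (x : Fin n → ℝ) (hx : ∀ i, 0 ≤ x i)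
    (lam1 lam2 : ℝ) (h0 : 0 < lam2) (h1 : 0 < lam1)
    (xj xk : ℝ) (hjk : xj < xk)
    (hj : xj = 0 ∨ ∃ i, x i = xj) (hk : ∃ i, x i = xk)
    (hgap : ∀ i, ¬ (xj < x i ∧ x i < xk))
    (hbelow : ∃ i, xk < x i)
    (d : ℕ) (hd : d = (Finset.univ.filter (fun i => xk ≤ x i)).card) :
    ∀ α ∈ Set.Ioo xj xk,
      HasDerivAt (Psi x lam1 lam2)
        ((1 / l2 (fun i => max (x i - α) 0)) *
          ((l1 (fun i => max (x i - α) 0)) ^ 2 / (l2 (fun i => max (x i - α) 0)) ^ 2 - d)) α :=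
  stmt_7_general x lam1 lam2 xj xk hgap hbelow d hd
end

section
/- With Ψ as in the auxiliary-function setting, Ψ is strictly decreasing on [0, x_{2nd-max}), where x_{2nd-max} is the second-largest distinct entry of x. -/
/-!
Away from the finitely many breakpoints `α = x i`, the vector `q(α) = (x - α)₊` has a fixed
support of size `k`, and `d‖q‖₁/dα = -k`, `d‖q‖₂²/dα = -2‖q‖₁`, so
`Ψ'(α) = (‖q‖₁² - k‖q‖₂²) / ‖q‖₂³`. For `α` below the second-largest value the support contains
two different entries, so strict Cauchy–Schwarz on the support makes `Ψ' < 0`; continuity of `Ψ`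
carries strict antitonicity across the breakpoints.
-/

open Finset Set

theorem sq_sum_lt_card_mul_sum_sq {ι R : Type*} [CommRing R] [LinearOrder R]
    [IsStrictOrderedRing R] {s : Finset ι} {f : ι → R} {i j : ι} (hi : i ∈ s) (hj : j ∈ s)
    (hij : f i ≠ f j) :
    (∑ k ∈ s, f k) ^ 2 < #s * ∑ k ∈ s, f k ^ 2 := by
  have lagrange : ∑ k ∈ s, ∑ l ∈ s, (f k - f l) ^ 2 =
      2 * (#s * ∑ k ∈ s, f k ^ 2 - (∑ k ∈ s, f k) ^ 2) := by
    simp only [sub_sq, Finset.sum_add_distrib, Finset.sum_sub_distrib, Finset.sum_const,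
      nsmul_eq_mul, ← Finset.mul_sum, ← Finset.sum_mul]
    ring
  have hpos : 0 < ∑ k ∈ s, ∑ l ∈ s, (f k - f l) ^ 2 :=
    Finset.sum_pos' (fun _ _ => Finset.sum_nonneg fun _ _ => sq_nonneg _)
      ⟨i, hi, Finset.sum_pos' (fun _ _ => sq_nonneg _)
        ⟨j, hj, sq_pos_of_ne_zero (sub_ne_zero.2 hij)⟩⟩
  linarith

theorem strictAntiOn_of_deriv_neg_of_finite {D : Set ℝ} (hD : Convex ℝ D) {f : ℝ → ℝ}
    (hf : ContinuousOn f D) {B : Set ℝ} (hB : B.Finite)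
    (hf' : ∀ x ∈ interior D \ B, deriv f x < 0) : StrictAntiOn f D := by
  induction B, hB using Set.Finite.induction_on generalizing D with
  | empty => exact strictAntiOn_of_deriv_neg hD hf fun x hx => hf' x ⟨hx, id⟩
  | @insert b B _ _ ih =>
    by_cases hbD : b ∈ D
    · have left : StrictAntiOn f (D ∩ Iic b) := by
        refine ih (hD.inter (convex_Iic b)) (hf.mono inter_subset_left) ?_
        rintro x ⟨hx, hxB⟩
        rw [interior_inter, interior_Iic] at hx
        exact hf' x ⟨hx.1, by rintro (rfl | h); exacts [hx.2.out.false, hxB h]⟩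
      have right : StrictAntiOn f (D ∩ Ici b) := by
        refine ih (hD.inter (convex_Ici b)) (hf.mono inter_subset_left) ?_
        rintro x ⟨hx, hxB⟩
        rw [interior_inter, interior_Ici] at hx
        exact hf' x ⟨hx.1, by rintro (rfl | h); exacts [hx.2.out.false, hxB h]⟩
      have := left.union right ⟨⟨hbD, mem_Iic.2 le_rfl⟩, fun _ h => h.2⟩
        ⟨⟨hbD, mem_Ici.2 le_rfl⟩, fun _ h => h.2⟩
      rwa [← Set.inter_union_distrib_left, Iic_union_Ici, inter_univ] at this
    · refine ih hD hf fun x ⟨hx, hxB⟩ => hf' x ⟨hx, ?_⟩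
      rintro (rfl | h)
      exacts [hbD (interior_subset hx), hxB h]

theorem hasDerivAt_max_sub_zero {a α : ℝ} (h : a ≠ α) :
    HasDerivAt (fun β => max (a - β) 0) (if α < a then -1 else 0) α := by
  rcases h.lt_or_gt with h | h
  · rw [if_neg h.not_gt]
    refine (hasDerivAt_const α (0 : ℝ)).congr_of_eventuallyEq ?_
    filter_upwards [eventually_gt_nhds h] with β hβ
    exact max_eq_right (by linarith)
  · rw [if_pos h]
    refine ((hasDerivAt_id α).const_sub a).congr_of_eventuallyEq ?_
    filter_upwards [eventually_lt_nhds h] with β hβ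
    exact max_eq_left (by linarith)

section PositivePart

variable {ι : Type*} [Fintype ι] {x : ι → ℝ} {α : ℝ}

theorem sum_max_sub_zero_pow_eq (x : ι → ℝ) (α : ℝ) {m : ℕ} (hm : m ≠ 0) :
    ∑ i, max (x i - α) 0 ^ m = ∑ i ∈ {i | α < x i}, (x i - α) ^ m := by
  rw [Finset.sum_filter]
  refine Finset.sum_congr rfl fun i _ => ?_
  split_ifs with h
  · rw [max_eq_left (sub_nonneg.2 h.le)]
  · rw [max_eq_right (sub_nonpos.2 (not_lt.1 h)), zero_pow hm]

theorem sum_max_sub_zero_sq_pos {i : ι} (hi : α < x i) : 0 < ∑ j, max (x j - α) 0 ^ 2 :=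
  Finset.sum_pos' (fun _ _ => sq_nonneg _)
    ⟨i, mem_univ i, pow_pos (lt_max_of_lt_left (sub_pos.2 hi)) 2⟩

theorem hasDerivAt_sum_max_sub_zero (hα : ∀ i, x i ≠ α) :
    HasDerivAt (fun β => ∑ i, max (x i - β) 0) (-#{i | α < x i}) α := by
  refine (HasDerivAt.fun_sum (u := univ) fun i _ =>
    hasDerivAt_max_sub_zero (hα i)).congr_deriv ?_
  simp [Finset.sum_ite]

theorem hasDerivAt_sum_max_sub_zero_sq (hα : ∀ i, x i ≠ α) :
    HasDerivAt (fun β => ∑ i, max (x i - β) 0 ^ 2) (-(2 * ∑ i, max (x i - α) 0)) α := by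
  refine (HasDerivAt.fun_sum (u := univ) fun i _ =>
    (hasDerivAt_max_sub_zero (hα i)).pow 2).congr_deriv ?_
  rw [Finset.mul_sum, ← Finset.sum_neg_distrib]
  refine Finset.sum_congr rfl fun i _ => ?_
  split_ifs with h
  · ring
  · rw [max_eq_right (by linarith)]
    ring

end PositivePart

theorem HasDerivAt.div_sqrt {S Q : ℝ → ℝ} {S' Q' α : ℝ} (hS : HasDerivAt S S' α)
    (hQ : HasDerivAt Q Q' α) (hQα : 0 < Q α) :
    HasDerivAt (fun β => S β / √(Q β)) ((S' * Q α - S α * Q' / 2) / (Q α * √(Q α))) α := by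
  refine (hS.div (hQ.sqrt hQα.ne') (Real.sqrt_pos.2 hQα).ne').congr_deriv ?_
  have hsqrt : √(Q α) ^ 2 = Q α := Real.sq_sqrt hQα.le
  have : 0 < √(Q α) := Real.sqrt_pos.2 hQα
  field_simp
  rw [hsqrt]
  ring

theorem Psi_eq {n : ℕ} (x : Fin n → ℝ) (lam1 lam2 : ℝ) :
    Psi x lam1 lam2 =
      fun α => (∑ i, max (x i - α) 0) / √(∑ i, max (x i - α) 0 ^ 2) - lam1 / lam2 := by
  ext α
  have h : ∀ i, |max (x i - α) 0| = max (x i - α) 0 :=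
    fun i => abs_of_nonneg (le_max_right _ _)
  simp only [Psi, l1, l2, h]

theorem continuousOn_Psi {n : ℕ} (x : Fin n → ℝ) (lam1 lam2 : ℝ) (i : Fin n) :
    ContinuousOn (Psi x lam1 lam2) (Iio (x i)) := by
  rw [Psi_eq]
  refine (ContinuousOn.div (by fun_prop) (by fun_prop) fun α hα => ?_).sub continuousOn_const
  exact (Real.sqrt_pos.2 (sum_max_sub_zero_sq_pos hα)).ne'

theorem deriv_Psi_neg {n : ℕ} {x : Fin n → ℝ} {lam1 lam2 α : ℝ} (hα : ∀ i, x i ≠ α)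
    {i j : Fin n} (hi : α < x i) (hj : α < x j) (hij : x i ≠ x j) :
    deriv (Psi x lam1 lam2) α < 0 := by
  have hQ := sum_max_sub_zero_sq_pos hi
  have hderiv :=
    (hasDerivAt_sum_max_sub_zero hα).div_sqrt (hasDerivAt_sum_max_sub_zero_sq hα) hQ
  rw [Psi_eq, (hderiv.sub_const (lam1 / lam2)).deriv]
  have hCS := sq_sum_lt_card_mul_sum_sq (s := {k | α < x k}) (f := fun k => x k - α)
    (mem_filter.2 ⟨mem_univ _, hi⟩) (mem_filter.2 ⟨mem_univ _, hj⟩) (sub_left_injective.ne hij)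
  have hS : ∑ k, max (x k - α) 0 = ∑ k ∈ {k | α < x k}, (x k - α) := by
    simpa using sum_max_sub_zero_pow_eq x α one_ne_zero
  rw [← hS, ← sum_max_sub_zero_pow_eq x α two_ne_zero] at hCS
  refine div_neg_of_neg_of_pos ?_ (by positivity)
  linear_combination hCS

theorem stmt_9_general {n : ℕ} (x : Fin n → ℝ)
    (lam1 lam2 : ℝ)
    (xmax x2 : ℝ) (hmaxmem : ∃ i, x i = xmax)
    (h2mem : ∃ i, x i = x2) (h2lt : x2 < xmax) :
    StrictAntiOn (Psi x lam1 lam2) (Set.Ico 0 x2) := by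
  obtain ⟨imax, rfl⟩ := hmaxmem
  obtain ⟨i2, rfl⟩ := h2mem
  refine strictAntiOn_of_deriv_neg_of_finite (convex_Ico 0 _)
    ((continuousOn_Psi x lam1 lam2 imax).mono fun α hα => hα.2.trans h2lt) (finite_range x) ?_
  rintro α ⟨hα, hαx⟩
  rw [interior_Ico] at hα
  exact deriv_Psi_neg (fun i hi => hαx ⟨i, hi⟩) (hα.2.trans h2lt) hα.2 h2lt.ne'

theorem stmt_9 {n : ℕ} (x : Fin n → ℝ) (hx : ∀ i, 0 ≤ x i)
    (lam1 lam2 : ℝ) (h0 : 0 < lam2) (h1 : 0 < lam1)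
    (xmax x2 : ℝ) (hub : ∀ i, x i ≤ xmax) (hmaxmem : ∃ i, x i = xmax)
    (h2mem : ∃ i, x i = x2) (h2lt : x2 < xmax)
    (h2ub : ∀ i, x i ≠ xmax → x i ≤ x2) :
    StrictAntiOn (Psi x lam1 lam2) (Set.Ico 0 x2) :=
  stmt_9_general x lam1 lam2 xmax x2 hmaxmem h2mem h2lt
end

section
/- Let x ∈ ℝ_{≥0}^n \ D with unique projection onto D and ‖x‖₁/‖x‖₂ > λ₁/λ₂, and let α* be the unique zero of the auxiliary function Ψ. Then proj_D(x) = λ₂ · max(x − α*·e, 0) / ‖max(x − α*·e, 0)‖₂. -/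
noncomputable def Dset (n : ℕ) (lam1 lam2 : ℝ) : Set (Fin n → ℝ) :=
  {s | (∀ i, 0 ≤ s i) ∧ l1 s = lam1 ∧ l2 s = lam2}
theorem stmt_11 {n : ℕ} (lam1 lam2 : ℝ)
    (h0 : 0 < lam2) (h1 : lam2 < lam1) (h2 : lam1 < Real.sqrt n * lam2)
    (x : Fin n → ℝ) (hx : ∀ i, 0 ≤ x i) (hxD : x ∉ Dset n lam1 lam2)
    (hratio : lam1 / lam2 < l1 x / l2 x)
    (p : Fin n → ℝ) (hp : p ∈ Dset n lam1 lam2)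
    (hmin : ∀ z ∈ Dset n lam1 lam2, l2 (fun i => p i - x i) ≤ l2 (fun i => z i - x i))
    (huniq : ∀ q ∈ Dset n lam1 lam2,
      (∀ z ∈ Dset n lam1 lam2, l2 (fun i => q i - x i) ≤ l2 (fun i => z i - x i)) → q = p)
    (xmax : ℝ) (hub : ∀ i, x i ≤ xmax) (hmaxmem : ∃ i, x i = xmax)
    (a : ℝ) (ha : a ∈ Set.Ico 0 xmax) (hzero : Psi x lam1 lam2 a = 0)
    (hauniq : ∀ b ∈ Set.Ico 0 xmax, Psi x lam1 lam2 b = 0 → b = a) :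
    ∀ i, p i = lam2 * max (x i - a) 0 / l2 (fun j => max (x j - a) 0) := by
  have ha0 : 0 ≤ a := ha.1
  set w : Fin n → ℝ := fun j => max (x j - a) 0 with hwdef
  have hw0 : ∀ j, 0 ≤ w j := fun j => le_max_right _ _
  set S : ℝ := ∑ j, (w j) ^ 2 with hSdef
  have hS0 : 0 ≤ S := Finset.sum_nonneg fun j _ => sq_nonneg _
  set L : ℝ := l2 w with hLdef
  have hL0 : 0 ≤ L := Real.sqrt_nonneg _
  have hLsq : L ^ 2 = S := Real.sq_sqrt hS0
  have hlam1pos : 0 < lam1 := h0.trans h1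
  have hratpos : 0 < lam1 / lam2 := div_pos hlam1pos h0
  -- Psi a = 0 gives l1 w / L = lam1 / lam2
  have hzero' : l1 w / L = lam1 / lam2 := by
    have h := hzero
    simp only [Psi, sub_eq_zero] at h
    exact h
  have hLpos : 0 < L := by
    rcases hL0.lt_or_eq with h | h
    · exact h
    · exfalso
      rw [← h, div_zero] at hzero'
      exact absurd hzero'.symm (ne_of_gt hratpos)
  have hl1w : l1 w = lam1 / lam2 * L := by
    have h := hzero'
    field_simp at h
    field_simp
    linarith
  have hsumw : ∑ j, w j = lam1 / lam2 * L := by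
    rw [← hl1w, l1]
    exact Finset.sum_congr rfl fun j _ => (abs_of_nonneg (hw0 j)).symm
  -- the candidate
  set q : Fin n → ℝ := fun j => lam2 * w j / L with hqdef
  have hq0 : ∀ j, 0 ≤ q j := fun j => by
    have := hw0 j
    positivity
  have hql1 : l1 q = lam1 := by
    have : l1 q = ∑ j, lam2 * w j / L := by
      refine Finset.sum_congr rfl fun j _ => abs_of_nonneg (hq0 j)
    rw [l1] at this ⊢
    rw [this]
    rw [show (∑ j, lam2 * w j / L) = (lam2 / L) * ∑ j, w j by
      rw [Finset.mul_sum]; exact Finset.sum_congr rfl fun j _ => by ring]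
    rw [hsumw]
    field_simp
  have hql2 : l2 q = lam2 := by
    rw [l2]
    have : (∑ j, (q j) ^ 2) = (lam2 / L) ^ 2 * S := by
      rw [Finset.mul_sum]
      exact Finset.sum_congr rfl fun j _ => by rw [hqdef]; ring
    have h2' : (lam2 / L) ^ 2 * S = lam2 ^ 2 := by
      rw [← hLsq]; field_simp
    rw [this, h2', Real.sqrt_sq h0.le]
  have hqD : q ∈ Dset n lam1 lam2 := ⟨hq0, hql1, hql2⟩
  -- key inner product computation
  have hwx : ∀ j, w j * x j = (w j) ^ 2 + a * w j := by
    intro j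
    rcases le_or_gt (x j - a) 0 with h | h
    · have : w j = 0 := max_eq_right h
      simp [this]
    · have : w j = x j - a := max_eq_left h.le
      rw [this]; ring
  have hqx : ∑ j, q j * x j = lam2 * L + a * lam1 := by
    have : ∑ j, q j * x j = (lam2 / L) * ∑ j, ((w j) ^ 2 + a * w j) := by
      rw [Finset.mul_sum]
      refine Finset.sum_congr rfl fun j _ => ?_
      rw [hqdef, ← hwx j]; ring
    rw [this, Finset.sum_add_distrib, ← Finset.mul_sum, hsumw, ← hSdef, ← hLsq]
    field_simp
  -- q is a minimizer
  have hqmin : ∀ z ∈ Dset n lam1 lam2,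
      l2 (fun i => q i - x i) ≤ l2 (fun i => z i - x i) := by
    intro z hz
    obtain ⟨hz0, hzl1, hzl2⟩ := hz
    have hsumz : ∑ j, z j = lam1 := by
      rw [← hzl1, l1]
      exact Finset.sum_congr rfl fun j _ => (abs_of_nonneg (hz0 j)).symm
    have hzsq : ∑ j, (z j) ^ 2 = lam2 ^ 2 := by
      rw [← hzl2, l2, Real.sq_sqrt (Finset.sum_nonneg fun j _ => sq_nonneg (z j))]
    have hqsq : ∑ j, (q j) ^ 2 = lam2 ^ 2 := by
      rw [← hql2, l2, Real.sq_sqrt (Finset.sum_nonneg fun j _ => sq_nonneg (q j))]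
    -- inner product bound: ∑ z x ≤ lam2 * L + a * lam1
    have hcs : ∑ j, z j * w j ≤ lam2 * L := by
      have := Real.sum_mul_le_sqrt_mul_sqrt Finset.univ z w
      rwa [show Real.sqrt (∑ j, (z j)^2) = lam2 from hzl2,
        show Real.sqrt (∑ j, (w j)^2) = L from rfl] at this
    have hzx : ∑ j, z j * x j ≤ lam2 * L + a * lam1 := by
      have h1' : ∀ j, z j * x j ≤ z j * w j + a * z j := by
        intro j
        have hxw : x j - a ≤ w j := le_max_left _ _
        nlinarith [hz0 j]
      calc ∑ j, z j * x j ≤ ∑ j, (z j * w j + a * z j) :=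
            Finset.sum_le_sum fun j _ => h1' j
        _ = (∑ j, z j * w j) + a * ∑ j, z j := by
            rw [Finset.sum_add_distrib, Finset.mul_sum]
        _ ≤ lam2 * L + a * lam1 := by
            rw [hsumz]; linarith
    -- compare squared norms
    rw [l2, l2]
    apply Real.sqrt_le_sqrt
    have e1 : ∑ j, (q j - x j) ^ 2
        = (∑ j, (q j)^2) - 2 * (∑ j, q j * x j) + ∑ j, (x j)^2 := by
      simp only [Finset.mul_sum, ← Finset.sum_sub_distrib, ← Finset.sum_add_distrib]
      exact Finset.sum_congr rfl fun j _ => by ring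
    have e2 : ∑ j, (z j - x j) ^ 2
        = (∑ j, (z j)^2) - 2 * (∑ j, z j * x j) + ∑ j, (x j)^2 := by
      simp only [Finset.mul_sum, ← Finset.sum_sub_distrib, ← Finset.sum_add_distrib]
      exact Finset.sum_congr rfl fun j _ => by ring
    rw [e1, e2, hqsq, hzsq, hqx]
    linarith
  have := huniq q hqD hqmin
  intro i
  rw [← this]
end

section
/- With a := d‖x̃‖₂² − ‖x̃‖₁² > 0, b := dλ₂² − λ₁² > 0, and α(x̃) := (1/d)(‖x̃‖₁ − λ₁√(a/b)) viewed as a function of x̃ ∈ ℝ_{>0}^d (entries not all equal), the gradient of α with respect to x̃ equals (λ₂²/b)·ẽᵀ − (λ₁/√(ab))·q̃ᵀ, where q̃ := x̃ − α·ẽ and ẽ is the all-ones vector. -/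
/-!
With `S v = ∑ i, v i`, the function `α` is assembled from the linear form `S` and the quadratic
form `A v = d ∑ i, v i ^ 2 - S v ^ 2`, whose derivative at `x` is `y ↦ 2 (d ⟪x, y⟫ - S x S y)`.
Lagrange's identity `2 A v = ∑ i j, (v i - v j) ^ 2` makes `A x > 0` for non-constant `x`, so
`√(A / b)` is differentiable at `x` and the chain rule gives the derivative of `α`. It takes the
stated form because `b √(a / b) = √(a b)` and `b = d λ₂² - λ₁²`.
-/

open Finset

section

variable {ι : Type*} [Fintype ι]

def dotCLM (w : ι → ℝ) : (ι → ℝ) →L[ℝ] ℝ := ∑ i, w i • ContinuousLinearMap.proj i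

@[simp]
lemma dotCLM_apply (w y : ι → ℝ) : dotCLM w y = ∑ i, w i * y i := by
  simp [dotCLM]

lemma hasFDerivAt_sum_apply (x : ι → ℝ) :
    HasFDerivAt (fun v : ι → ℝ => ∑ i, v i) (dotCLM 1) x := by
  convert (dotCLM (1 : ι → ℝ)).hasFDerivAt using 1
  ext v
  simp

lemma hasFDerivAt_sum_sq_apply (x : ι → ℝ) :
    HasFDerivAt (fun v : ι → ℝ => ∑ i, v i ^ 2) (2 • dotCLM x) x := by
  refine (HasFDerivAt.fun_sum (u := univ) fun i _ =>
    (hasFDerivAt_apply (𝕜 := ℝ) i x).pow 2).congr_fderiv ?_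
  ext y
  simp [mul_sum, mul_assoc]

lemma hasFDerivAt_mul_sum_sq_sub_sq_sum (c : ℝ) (x : ι → ℝ) :
    HasFDerivAt (fun v : ι → ℝ => c * ∑ i, v i ^ 2 - (∑ i, v i) ^ 2)
      (2 • (c • dotCLM x - (∑ i, x i) • dotCLM 1)) x := by
  refine (((hasFDerivAt_sum_sq_apply x).const_mul c).fun_sub
    ((hasFDerivAt_sum_apply x).pow 2)).congr_fderiv ?_
  ext y
  simp only [Nat.add_one_sub_one, pow_one, nsmul_eq_mul, Nat.cast_ofNat, sub_apply, smul_apply,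
    dotCLM_apply, smul_eq_mul, Pi.one_apply, one_mul]
  ring

lemma two_mul_card_mul_sum_sq_sub_sq_sum (v : ι → ℝ) :
    2 * (Fintype.card ι * ∑ i, v i ^ 2 - (∑ i, v i) ^ 2) = ∑ i, ∑ j, (v i - v j) ^ 2 := by
  simp only [sub_sq, sum_add_distrib, sum_sub_distrib, sum_const, card_univ, nsmul_eq_mul,
    ← mul_sum, ← sum_mul]
  ring

lemma card_mul_sum_sq_sub_sq_sum_pos {v : ι → ℝ} (h : ∃ i j, v i ≠ v j) :
    0 < Fintype.card ι * ∑ i, v i ^ 2 - (∑ i, v i) ^ 2 := by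
  obtain ⟨i, j, hij⟩ := h
  have : 0 < ∑ i, ∑ j, (v i - v j) ^ 2 :=
    sum_pos' (fun _ _ => sum_nonneg fun _ _ => sq_nonneg _)
      ⟨i, mem_univ _, sum_pos' (fun _ _ => sq_nonneg _)
        ⟨j, mem_univ _, sq_pos_of_ne_zero (sub_ne_zero.2 hij)⟩⟩
  linarith [two_mul_card_mul_sum_sq_sub_sq_sum v]

end

lemma sqrt_mul_eq_mul_sqrt_div {a b : ℝ} (hb : 0 < b) : √(a * b) = b * √(a / b) := by
  rw [← Real.sqrt_sq hb.le, ← Real.sqrt_mul (sq_nonneg b), Real.sqrt_sq hb.le]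
  congr 1
  field_simp

lemma chain_rule_value_eq {c a b l₁ l₂ S Sy P : ℝ} (hc : c ≠ 0) (ha : 0 < a) (hb : 0 < b)
    (hbl : b = c * l₂ ^ 2 - l₁ ^ 2) :
    (Sy - l₁ * (c * P - S * Sy) / (b * √(a / b))) / c
      = l₂ ^ 2 / b * Sy - l₁ / √(a * b) * (P - (S - l₁ * √(a / b)) / c * Sy) := by
  have hr : 0 < √(a / b) := Real.sqrt_pos.2 (div_pos ha hb)
  rw [sqrt_mul_eq_mul_sqrt_div hb]
  field_simp
  linear_combination Sy * √(a / b) * hbl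

theorem stmt_17_general {d : ℕ}
    (lam1 lam2 : ℝ) (hlt : lam1 ^ 2 < d * lam2 ^ 2)
    (b : ℝ) (hb : b = d * lam2 ^ 2 - lam1 ^ 2)
    (A : (Fin d → ℝ) → ℝ) (hA : ∀ v, A v = d * (∑ i, (v i) ^ 2) - (∑ i, v i) ^ 2)
    (αf : (Fin d → ℝ) → ℝ)
    (hαf : ∀ v, αf v = (1 / d) * ((∑ i, v i) - lam1 * Real.sqrt (A v / b)))
    (x : Fin d → ℝ) (hne : ∃ i j, x i ≠ x j)
    (a : ℝ) (ha : a = A x)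
    (q : Fin d → ℝ) (hq : ∀ i, q i = x i - αf x) :
    DifferentiableAt ℝ αf x ∧
    ∀ y : Fin d → ℝ,
      fderiv ℝ αf x y
        = (lam2 ^ 2 / b) * (∑ i, y i) - (lam1 / Real.sqrt (a * b)) * (∑ i, q i * y i) := by
  have hd0 : (d : ℝ) ≠ 0 := by
    obtain ⟨i, -⟩ := hne
    exact Nat.cast_ne_zero.2 i.pos.ne'
  have hb0 : 0 < b := by linarith
  have ha0 : 0 < a := by
    simpa [ha, hA] using card_mul_sum_sq_sub_sq_sum_pos hne
  have hAx : HasFDerivAt A _ x := funext hA ▸ hasFDerivAt_mul_sum_sq_sub_sq_sum (d : ℝ) x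
  simp_rw [div_eq_mul_inv _ b] at hαf
  have hAb : A x * b⁻¹ ≠ 0 := by rw [← ha]; positivity
  have hαx : HasFDerivAt αf _ x := funext hαf ▸
    ((hasFDerivAt_sum_apply x).sub
      (((hAx.mul_const b⁻¹).sqrt hAb).const_mul lam1)).const_mul (1 / (d : ℝ))
  refine ⟨hαx.differentiableAt, fun y => ?_⟩
  have hqy : ∑ i, q i * y i = ∑ i, x i * y i - αf x * ∑ i, y i := by
    simp only [hq, sub_mul, sum_sub_distrib, ← mul_sum]
  rw [hαx.fderiv, hqy, hαf, ← ha]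
  simp only [smul_apply, sub_apply, dotCLM_apply, Pi.one_apply, one_mul, smul_eq_mul,
    nsmul_eq_mul, ← div_eq_mul_inv a b]
  linear_combination chain_rule_value_eq (S := ∑ i, x i) (Sy := ∑ i, y i)
    (P := ∑ i, x i * y i) hd0 ha0 hb0 hb

theorem stmt_17 {d : ℕ} (hd : 2 ≤ d)
    (lam1 lam2 : ℝ) (h1 : 0 < lam1) (h2 : 0 < lam2) (hlt : lam1 ^ 2 < d * lam2 ^ 2)
    (b : ℝ) (hb : b = d * lam2 ^ 2 - lam1 ^ 2)
    (A : (Fin d → ℝ) → ℝ) (hA : ∀ v, A v = d * (∑ i, (v i) ^ 2) - (∑ i, v i) ^ 2)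
    (αf : (Fin d → ℝ) → ℝ)
    (hαf : ∀ v, αf v = (1 / d) * ((∑ i, v i) - lam1 * Real.sqrt (A v / b)))
    (x : Fin d → ℝ) (hxpos : ∀ i, 0 < x i) (hne : ∃ i j, x i ≠ x j)
    (a : ℝ) (ha : a = A x)
    (q : Fin d → ℝ) (hq : ∀ i, q i = x i - αf x) :
    DifferentiableAt ℝ αf x ∧
    ∀ y : Fin d → ℝ,
      fderiv ℝ αf x y
        = (lam2 ^ 2 / b) * (∑ i, y i) - (lam1 / Real.sqrt (a * b)) * (∑ i, q i * y i) :=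
  stmt_17_general lam1 lam2 hlt b hb A hA αf hαf x hne a ha q hq
end

section
/- Under the hypotheses of the gradient lemma (x ∈ ℝ_{≥0}^n \ D with unique projection p = proj_D(x), and x_i ≠ α for all i where α is the shrinkage threshold), the Jacobian of proj_D at x equals VᵀGV, where V is the slicing matrix onto the support I of p, d = |I|, p̃ = Vp, ẽ the all-ones vector in ℝ^d, a = d‖Vx‖₂² − ‖Vx‖₁², b = dλ₂² − λ₁², and G = √(b/a)·E_d − (1/√(ab))·(λ₂²ẽẽᵀ + d·p̃p̃ᵀ − λ₁(ẽp̃ᵀ + p̃ẽᵀ)). -/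
/-!
Points of `Dset` of the form `K • (y - β)₊` with `K ≥ 0` are the unique nearest points of `Dset`
to `y`. The projection `p` of `x` has this form with support `I`, and on `I` its scale and
threshold are forced by the two norm constraints: `K = √(b / a)` and `β` is an explicit
continuous function of `x`. The same closed form `localProj` is then a point of this kind for
every `y` close to `x`, because `x i ≠ α` makes the separation of `I` from its complement by the
threshold strict, hence stable. So `P` agrees with the smooth map `localProj` near `x`, and the
Jacobian is obtained by differentiating `localProj`.
-/

open Finset Filter Topology

section Dset

variable {n : ℕ} {lam1 lam2 : ℝ}

theorem l2_sq (x : Fin n → ℝ) : l2 x ^ 2 = ∑ i, x i ^ 2 :=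
  Real.sq_sqrt (sum_nonneg fun i _ => sq_nonneg (x i))

theorem l2_le_l2_iff {x y : Fin n → ℝ} : l2 x ≤ l2 y ↔ ∑ i, x i ^ 2 ≤ ∑ i, y i ^ 2 :=
  Real.sqrt_le_sqrt_iff (sum_nonneg fun i _ => sq_nonneg (y i))

theorem sum_eq_of_mem_Dset {s : Fin n → ℝ} (hs : s ∈ Dset n lam1 lam2) :
    ∑ i, s i = lam1 ∧ ∑ i, s i ^ 2 = lam2 ^ 2 := by
  obtain ⟨hs0, hs1, hs2⟩ := hs
  refine ⟨?_, by rw [← hs2, l2_sq]⟩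
  rw [← hs1, l1]
  exact sum_congr rfl fun i _ => (abs_of_nonneg (hs0 i)).symm

theorem mem_Dset_of_sum_eq (hlam2 : 0 ≤ lam2) {s : Fin n → ℝ} (hs0 : ∀ i, 0 ≤ s i)
    (hs1 : ∑ i, s i = lam1) (hs2 : ∑ i, s i ^ 2 = lam2 ^ 2) : s ∈ Dset n lam1 lam2 := by
  refine ⟨hs0, ?_, by rw [l2, hs2, Real.sqrt_sq hlam2]⟩
  rw [← hs1, l1]
  exact sum_congr rfl fun i _ => abs_of_nonneg (hs0 i)

theorem sum_sub_sq (u v : Fin n → ℝ) :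
    ∑ i, (u i - v i) ^ 2 = ∑ i, u i ^ 2 - 2 * ∑ i, u i * v i + ∑ i, v i ^ 2 := by
  simp only [sub_sq, sum_add_distrib, sum_sub_distrib, mul_sum, mul_assoc]

/-- On `Dset` the distance to `y` is decreasing in `⟪·, y⟫`, and a scaled soft thresholding
`w = K (y - β)₊` maximizes `⟪·, y - β⟫`: for `q ∈ Dset`,
`K ⟪w, y - β⟫ = ‖w‖² = λ₂² ≤ K ⟪q, y - β⟫ ≤ ⟪q, w⟫`, which forces `‖q - w‖² ≤ 0`. -/
theorem eq_of_mem_Dset_of_l2_sub_le {y w q : Fin n → ℝ} {K β : ℝ} (hK : 0 ≤ K)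
    (hw : ∀ i, w i = K * max (y i - β) 0) (hwD : w ∈ Dset n lam1 lam2)
    (hqD : q ∈ Dset n lam1 lam2) (hle : l2 (fun i => q i - y i) ≤ l2 (fun i => w i - y i)) :
    q = w := by
  obtain ⟨hw1, hw2⟩ := sum_eq_of_mem_Dset hwD
  obtain ⟨hq1, hq2⟩ := sum_eq_of_mem_Dset hqD
  have hinner : ∑ i, w i * y i ≤ ∑ i, q i * y i := by
    rw [l2_le_l2_iff, sum_sub_sq, sum_sub_sq, hq2, hw2] at hle
    linarith
  have hww : ∑ i, w i * (K * (y i - β)) = lam2 ^ 2 := by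
    rw [← hw2]
    refine sum_congr rfl fun i _ => ?_
    rcases le_total (y i - β) 0 with h | h
    · rw [hw i, max_eq_right h]; ring
    · rw [hw i, max_eq_left h]; ring
  have hqw : ∑ i, q i * (K * (y i - β)) ≤ ∑ i, q i * w i :=
    sum_le_sum fun i _ => mul_le_mul_of_nonneg_left
      (by rw [hw i]; exact mul_le_mul_of_nonneg_left (le_max_left _ _) hK) (hqD.1 i)
  have hshift : ∀ u : Fin n → ℝ, ∑ i, u i * (K * (y i - β))
      = K * (∑ i, u i * y i - β * ∑ i, u i) := fun u => by
    simp only [mul_sub, sum_sub_distrib, mul_sum]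
    congr 1 <;> exact sum_congr rfl fun i _ => by ring
  have hdist : ∑ i, (q i - w i) ^ 2 ≤ 0 := by
    rw [hshift, hw1] at hww
    rw [hshift, hq1] at hqw
    rw [sum_sub_sq, hq2, hw2]
    nlinarith [mul_le_mul_of_nonneg_left hinner hK]
  funext i
  have := (sum_eq_zero_iff_of_nonneg fun j _ => sq_nonneg (q j - w j)).1
    (hdist.antisymm (sum_nonneg fun j _ => sq_nonneg _)) i (mem_univ i)
  exact sub_eq_zero.1 (pow_eq_zero_iff two_ne_zero |>.1 this)

end Dset

noncomputable section

variable {n : ℕ} (I : Finset (Fin n)) (lam1 b : ℝ)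

def dispersion (y : Fin n → ℝ) : ℝ := #I * ∑ j ∈ I, y j ^ 2 - (∑ j ∈ I, y j) ^ 2

def threshold (y : Fin n → ℝ) : ℝ :=
  (∑ j ∈ I, y j - lam1 * √(dispersion I y) / √b) / #I

/-- With `b = #I * λ₂² - λ₁²`, this is the projection of `y` onto `Dset` as long as
`threshold I lam1 b y` separates `I` from its complement. -/
def localProj (y : Fin n → ℝ) (i : Fin n) : ℝ :=
  if i ∈ I then √b / √(dispersion I y) * (y i - (∑ j ∈ I, y j) / #I) + lam1 / #I else 0

variable {I lam1 b}

theorem card_pos_of_dispersion_pos {y : Fin n → ℝ} (hA : 0 < dispersion I y) : 0 < #I := by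
  refine card_pos.2 (nonempty_iff_ne_empty.2 fun hI => ?_)
  simp [dispersion, hI] at hA

theorem dispersion_mul_sub (c t : ℝ) (y : Fin n → ℝ) :
    dispersion I (fun i => c * (y i - t)) = c ^ 2 * dispersion I y := by
  simp only [dispersion, mul_pow, sub_sq, ← mul_sum, sum_add_distrib, sum_sub_distrib, sum_const,
    nsmul_eq_mul, ← sum_mul]
  ring

theorem sum_sub_mean (hI : #I ≠ 0) (y : Fin n → ℝ) :
    ∑ i ∈ I, (y i - (∑ j ∈ I, y j) / #I) = 0 := by
  rw [sum_sub_distrib, sum_const, nsmul_eq_mul]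
  field_simp
  ring

theorem sum_sub_mean_sq (hI : #I ≠ 0) (y : Fin n → ℝ) :
    ∑ i ∈ I, (y i - (∑ j ∈ I, y j) / #I) ^ 2 = dispersion I y / #I := by
  simp only [sub_sq, sum_add_distrib, sum_sub_distrib, sum_const, nsmul_eq_mul, ← sum_mul,
    mul_assoc, ← mul_sum, dispersion]
  field_simp
  ring

theorem localProj_of_mem (hb : 0 < b) {y : Fin n → ℝ} (hA : 0 < dispersion I y) {i : Fin n}
    (hi : i ∈ I) :
    localProj I lam1 b y i = √b / √(dispersion I y) * (y i - threshold I lam1 b y) := by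
  have := (card_pos_of_dispersion_pos hA).ne'
  have := (Real.sqrt_pos.2 hA).ne'
  have := (Real.sqrt_pos.2 hb).ne'
  rw [localProj, if_pos hi, threshold]
  field_simp
  ring

theorem localProj_of_notMem {y : Fin n → ℝ} {i : Fin n} (hi : i ∉ I) :
    localProj I lam1 b y i = 0 := if_neg hi

theorem localProj_eq_mul_max (hb : 0 < b) {y : Fin n → ℝ} (hA : 0 < dispersion I y)
    (hin : ∀ i ∈ I, threshold I lam1 b y < y i) (hout : ∀ i ∉ I, y i ≤ threshold I lam1 b y)
    (i : Fin n) :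
    localProj I lam1 b y i = √b / √(dispersion I y) * max (y i - threshold I lam1 b y) 0 := by
  by_cases hi : i ∈ I
  · rw [localProj_of_mem hb hA hi, max_eq_left (sub_pos.2 (hin i hi)).le]
  · rw [localProj_of_notMem hi, max_eq_right (sub_nonpos.2 (hout i hi)), mul_zero]

theorem localProj_mem_Dset {lam2 : ℝ} (hlam2 : 0 ≤ lam2) (hb : b = #I * lam2 ^ 2 - lam1 ^ 2)
    (hbpos : 0 < b) {y : Fin n → ℝ} (hA : 0 < dispersion I y)
    (hin : ∀ i ∈ I, threshold I lam1 b y < y i) : localProj I lam1 b y ∈ Dset n lam1 lam2 := by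
  have hI := (card_pos_of_dispersion_pos hA).ne'
  have hsum : ∀ f : ℝ → ℝ, f 0 = 0 →
      ∑ i, f (localProj I lam1 b y i) =
        ∑ i ∈ I, f (√b / √(dispersion I y) * (y i - (∑ j ∈ I, y j) / #I) + lam1 / #I) :=
    fun f hf => by
      rw [← sum_subset (subset_univ I) fun i _ hi => by rw [localProj_of_notMem hi, hf]]
      exact sum_congr rfl fun i hi => by rw [localProj, if_pos hi]
  refine mem_Dset_of_sum_eq hlam2 (fun i => ?_) ?_ ?_
  · by_cases hi : i ∈ I
    · rw [localProj_of_mem hbpos hA hi]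
      exact mul_nonneg (by positivity) (sub_pos.2 (hin i hi)).le
    · rw [localProj_of_notMem hi]
  · rw [hsum (fun r => r) rfl, sum_add_distrib, ← mul_sum, sum_sub_mean hI, sum_const, nsmul_eq_mul]
    field_simp
    ring
  · rw [hsum (fun r => r ^ 2) (zero_pow two_ne_zero)]
    simp only [add_sq, mul_pow, sum_add_distrib, ← mul_sum, ← sum_mul, sum_sub_mean hI,
      sum_sub_mean_sq hI, sum_const, nsmul_eq_mul, div_pow, Real.sq_sqrt hbpos.le,
      Real.sq_sqrt hA.le]
    field_simp
    rw [hb]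
    ring

theorem scale_eq_and_eq_threshold_of_mem_Dset {lam2 : ℝ} (hb : b = #I * lam2 ^ 2 - lam1 ^ 2)
    (hbpos : 0 < b) {p x : Fin n → ℝ} (hpD : p ∈ Dset n lam1 lam2) {c α : ℝ} (hc : 0 < c)
    (hpI : ∀ i ∈ I, p i = c * (x i - α)) (hp0 : ∀ i ∉ I, p i = 0) (hA : 0 < dispersion I x) :
    c = √b / √(dispersion I x) ∧ α = threshold I lam1 b x := by
  obtain ⟨hp1, hp2⟩ := sum_eq_of_mem_Dset hpD
  have hsub : ∀ f : ℝ → ℝ, f 0 = 0 → ∑ i, f (p i) = ∑ i ∈ I, f (c * (x i - α)) := fun f hf => by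
    rw [← sum_subset (subset_univ I) fun i _ hi => by rw [hp0 i hi, hf]]
    exact sum_congr rfl fun i hi => by rw [hpI i hi]
  rw [hsub (fun r => r) rfl] at hp1
  rw [hsub (fun r => r ^ 2) (zero_pow two_ne_zero)] at hp2
  have hcA : c ^ 2 * dispersion I x = b := by
    rw [← dispersion_mul_sub, dispersion, hb, hp1]
    simp only [hp2]
  have hcK : c = √b / √(dispersion I x) := by
    rw [← hcA, Real.sqrt_mul (sq_nonneg c), Real.sqrt_sq hc.le,
      mul_div_cancel_right₀ _ (Real.sqrt_pos.2 hA).ne']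
  refine ⟨hcK, ?_⟩
  have hI := (card_pos_of_dispersion_pos hA).ne'
  rw [← mul_sum, sum_sub_distrib, sum_const, nsmul_eq_mul, hcK] at hp1
  have := (Real.sqrt_pos.2 hA).ne'
  have := (Real.sqrt_pos.2 hbpos).ne'
  rw [threshold, ← hp1]
  field_simp
  ring

theorem continuous_dispersion : Continuous (dispersion I) := by
  unfold dispersion; fun_prop

theorem continuous_threshold : Continuous (threshold I lam1 b) := by
  have := continuous_dispersion (I := I)
  unfold threshold; fun_prop

theorem eventuallyEq_localProj {lam2 : ℝ} {P : (Fin n → ℝ) → Fin n → ℝ}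
    (hP : ∀ y, P y ∈ Dset n lam1 lam2 ∧
      ∀ z ∈ Dset n lam1 lam2, l2 (fun i => P y i - y i) ≤ l2 (fun i => z i - y i))
    (hlam2 : 0 ≤ lam2) (hb : b = #I * lam2 ^ 2 - lam1 ^ 2) (hbpos : 0 < b) {x : Fin n → ℝ}
    (hA : 0 < dispersion I x) (hin : ∀ i ∈ I, threshold I lam1 b x < x i)
    (hout : ∀ i ∉ I, x i < threshold I lam1 b x) : P =ᶠ[𝓝 x] localProj I lam1 b := by
  have hβ := continuous_threshold (I := I) (lam1 := lam1) (b := b)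
  have hsep : ∀ᶠ y in 𝓝 x, ∀ i, (i ∈ I → threshold I lam1 b y < y i) ∧
      (i ∉ I → y i ≤ threshold I lam1 b y) := by
    refine eventually_all.2 fun i => ?_
    by_cases hi : i ∈ I
    · filter_upwards [hβ.continuousAt.eventually_lt (continuous_apply i).continuousAt (hin i hi)]
        with y hy using ⟨fun _ => hy, absurd hi⟩
    · filter_upwards [(continuous_apply i).continuousAt.eventually_lt hβ.continuousAt
        (hout i hi)] with y hy using ⟨(absurd · hi), fun _ => hy.le⟩
  filter_upwards [continuousAt_const.eventually_lt continuous_dispersion.continuousAt hA, hsep]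
    with y hAy hsepy
  have hFD := localProj_mem_Dset hlam2 hb hbpos hAy fun i => (hsepy i).1
  exact eq_of_mem_Dset_of_l2_sub_le (by positivity)
    (localProj_eq_mul_max hbpos hAy (fun i => (hsepy i).1) fun i => (hsepy i).2)
    hFD (hP y).1 ((hP y).2 _ hFD)

section Derivative

open ContinuousLinearMap

theorem fderiv_apply_coord {ι E : Type*} [Fintype ι] [NormedAddCommGroup E] [NormedSpace ℝ E]
    {Φ : E → ι → ℝ} {x : E} (hΦ : DifferentiableAt ℝ Φ x) (v : E) (i : ι) :
    fderiv ℝ Φ x v i = fderiv ℝ (fun y => Φ y i) x v := by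
  rw [fderiv_apply hΦ]; rfl

theorem hasFDerivAt_dispersion (x : Fin n → ℝ) :
    HasFDerivAt (dispersion I)
      (∑ j ∈ I, (2 * (#I * x j - ∑ k ∈ I, x k)) • proj (R := ℝ) (φ := fun _ : Fin n => ℝ) j) x := by
  have hsum := HasFDerivAt.fun_sum (u := I) fun j (_ : j ∈ I) => hasFDerivAt_apply (𝕜 := ℝ) j x
  have hsq := HasFDerivAt.fun_sum (u := I) fun j (_ : j ∈ I) =>
    (hasFDerivAt_apply (𝕜 := ℝ) j x).pow 2
  refine ((hsq.const_mul (#I : ℝ)).sub (hsum.pow 2)).congr_fderiv ?_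
  ext v
  have hterm : ∀ j, 2 * (#I * x j - ∑ k ∈ I, x k) * v j
      = #I * (2 * x j * v j) - 2 * (∑ k ∈ I, x k) * v j := fun j => by ring
  simp [hterm, sum_sub_distrib, ← mul_sum]

theorem hasFDerivAt_localProj_of_mem {x : Fin n → ℝ} (hA : 0 < dispersion I x) {i : Fin n}
    (hi : i ∈ I) :
    HasFDerivAt (fun y => localProj I lam1 b y i)
      ((√b / √(dispersion I x)) •
          (proj i - (#I : ℝ)⁻¹ • ∑ j ∈ I, proj (R := ℝ) (φ := fun _ : Fin n => ℝ) j) -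
        (√b / √(dispersion I x) / dispersion I x * (x i - (∑ j ∈ I, x j) / #I)) •
          ∑ j ∈ I, (#I * x j - ∑ k ∈ I, x k) • proj j) x := by
  have hsum := HasFDerivAt.fun_sum (u := I) fun j (_ : j ∈ I) => hasFDerivAt_apply (𝕜 := ℝ) j x
  have hsqrt := (hasFDerivAt_dispersion x).sqrt hA.ne'
  have hK := ((hasDerivAt_inv (Real.sqrt_pos.2 hA).ne').comp_hasFDerivAt x hsqrt).const_mul √b
  have h := (hK.mul ((hasFDerivAt_apply i x).sub (hsum.const_mul (#I : ℝ)⁻¹))).add_const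
    (lam1 / #I)
  have hfun : (fun y => localProj I lam1 b y i) = fun y =>
      √b * (√(dispersion I y))⁻¹ * (y i - (#I : ℝ)⁻¹ * ∑ j ∈ I, y j) + lam1 / #I := by
    funext y; rw [localProj, if_pos hi]; ring
  rw [hfun]
  refine h.congr_fderiv ?_
  ext v
  simp only [Function.comp_apply, Pi.sub_apply, one_div, mul_inv_rev, neg_smul, smul_neg,
    add_apply, smul_apply, sub_apply, proj_apply, _root_.sum_apply, smul_eq_mul, neg_apply]
  rw [Real.sq_sqrt hA.le]
  simp only [mul_assoc, ← mul_sum]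
  field_simp
  ring

theorem differentiableAt_localProj {x : Fin n → ℝ} (hA : 0 < dispersion I x) :
    DifferentiableAt ℝ (localProj I lam1 b) x := by
  refine differentiableAt_pi.2 fun i => ?_
  by_cases hi : i ∈ I
  · exact (hasFDerivAt_localProj_of_mem hA hi).differentiableAt
  · simp only [localProj_of_notMem hi]
    exact differentiableAt_const 0

theorem fderiv_localProj_apply_of_mem {x : Fin n → ℝ} (hA : 0 < dispersion I x) {i : Fin n}
    (hi : i ∈ I) (v : Fin n → ℝ) :
    fderiv ℝ (localProj I lam1 b) x v i =
      √b / √(dispersion I x) * (v i - (∑ j ∈ I, v j) / #I) -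
        √b / √(dispersion I x) / dispersion I x * (x i - (∑ j ∈ I, x j) / #I) *
          (#I * ∑ j ∈ I, x j * v j - (∑ j ∈ I, x j) * ∑ j ∈ I, v j) := by
  rw [fderiv_apply_coord (differentiableAt_localProj hA),
    (hasFDerivAt_localProj_of_mem hA hi).fderiv]
  simp [sub_mul, sum_sub_distrib, mul_sum, mul_assoc, div_eq_inv_mul]

theorem fderiv_localProj_apply {lam2 : ℝ} (hb : b = #I * lam2 ^ 2 - lam1 ^ 2) (hbpos : 0 < b)
    {x : Fin n → ℝ} (hA : 0 < dispersion I x) (v : Fin n → ℝ) (i : Fin n) :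
    fderiv ℝ (localProj I lam1 b) x v i =
      if i ∈ I then
        √(b / dispersion I x) * v i - 1 / √(dispersion I x * b) *
          (lam2 ^ 2 * ∑ j ∈ I, v j +
            #I * (localProj I lam1 b x i * ∑ j ∈ I, localProj I lam1 b x j * v j) -
            lam1 * (∑ j ∈ I, localProj I lam1 b x j * v j +
              localProj I lam1 b x i * ∑ j ∈ I, v j))
      else 0 := by
  split_ifs with hi
  · have hI : (#I : ℝ) ≠ 0 := Nat.cast_ne_zero.2 (card_pos_of_dispersion_pos hA).ne'
    have hpv : ∑ j ∈ I, localProj I lam1 b x j * v j = √b / √(dispersion I x) *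
        (∑ j ∈ I, x j * v j - (∑ j ∈ I, x j) / #I * ∑ j ∈ I, v j) + lam1 / #I * ∑ j ∈ I, v j := by
      have hterm : ∀ j ∈ I, localProj I lam1 b x j * v j = √b / √(dispersion I x) *
          (x j * v j - (∑ k ∈ I, x k) / #I * v j) + lam1 / #I * v j := fun j hj => by
        rw [localProj, if_pos hj]; ring
      rw [sum_congr rfl hterm, sum_add_distrib, ← mul_sum, ← mul_sum, sum_sub_distrib, ← mul_sum]
    have hsqrt_div : √(b / dispersion I x) = √b / √(dispersion I x) := Real.sqrt_div' _ hA.le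
    have hsqrt_mul : 1 / √(dispersion I x * b) = √b / √(dispersion I x) / b := by
      rw [Real.sqrt_mul hA.le]
      field_simp
      rw [Real.sq_sqrt hbpos.le]
    have hdisp : dispersion I x = b / (√b / √(dispersion I x)) ^ 2 := by
      rw [div_pow, Real.sq_sqrt hbpos.le, Real.sq_sqrt hA.le]
      field_simp
    rw [fderiv_localProj_apply_of_mem hA hi, hpv, localProj, if_pos hi, hsqrt_div, hsqrt_mul]
    generalize √b / √(dispersion I x) = K at hdisp ⊢
    rw [hdisp, show lam2 ^ 2 = (b + lam1 ^ 2) / #I by rw [hb]; field_simp; ring]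
    field_simp
    ring
  · rw [fderiv_apply_coord (differentiableAt_localProj hA)]
    simp only [localProj_of_notMem hi, fderiv_const_apply, zero_apply]

end Derivative

end

theorem stmt_18_general {n : ℕ} (lam1 lam2 : ℝ)
    (h0 : 0 < lam2)
    (x : Fin n → ℝ)
    (P : (Fin n → ℝ) → (Fin n → ℝ))
    (hP : ∀ y, P y ∈ Dset n lam1 lam2 ∧
      ∀ z ∈ Dset n lam1 lam2, l2 (fun i => P y i - y i) ≤ l2 (fun i => z i - y i))
    (p : Fin n → ℝ) (hpx : P x = p)
    (α : ℝ)
    (hα : ∀ i, p i = lam2 * max (x i - α) 0 / l2 (fun j => max (x j - α) 0))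
    (hne : ∀ i, x i ≠ α)
    (I : Finset (Fin n)) (hI : I = Finset.univ.filter (fun i => 0 < p i))
    (d : ℕ) (hd : d = I.card)
    (a b : ℝ)
    (ha : a = d * (∑ i ∈ I, (x i) ^ 2) - (∑ i ∈ I, x i) ^ 2) (hapos : 0 < a)
    (hb : b = d * lam2 ^ 2 - lam1 ^ 2) (hbpos : 0 < b) :
    DifferentiableAt ℝ P x ∧
    ∀ y : Fin n → ℝ, ∀ i : Fin n,
      fderiv ℝ P x y i =
        if i ∈ I then
          Real.sqrt (b / a) * y i -
            (1 / Real.sqrt (a * b)) *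
              (lam2 ^ 2 * (∑ j ∈ I, y j) + d * (p i * ∑ j ∈ I, p j * y j)
                - lam1 * ((∑ j ∈ I, p j * y j) + p i * (∑ j ∈ I, y j)))
        else 0 := by
  subst hd ha
  set c := lam2 / l2 (fun j => max (x j - α) 0)
  have hp : ∀ i, p i = c * max (x i - α) 0 := fun i => by rw [hα i]; ring
  have hc : 0 < c := by
    obtain ⟨i, hi⟩ := card_pos.1 (card_pos_of_dispersion_pos hapos)
    have hpi := (mem_filter.1 (hI ▸ hi)).2
    rw [hp] at hpi
    exact pos_of_mul_pos_left hpi (le_max_right _ _)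
  have hmem : ∀ i, i ∈ I ↔ α < x i := fun i => by
    simp [hI, hp, mul_pos_iff_of_pos_left hc]
  obtain ⟨hcK, hαβ⟩ := scale_eq_and_eq_threshold_of_mem_Dset hb hbpos (hpx ▸ (hP x).1) hc
    (fun i hi => by rw [hp, max_eq_left (sub_pos.2 ((hmem i).1 hi)).le])
    (fun i hi => by rw [hp, max_eq_right (sub_nonpos.2 (not_lt.1 ((hmem i).not.1 hi))), mul_zero])
    hapos
  have hin : ∀ i ∈ I, threshold I lam1 b x < x i := fun i hi => hαβ ▸ (hmem i).1 hi
  have hout : ∀ i ∉ I, x i < threshold I lam1 b x := fun i hi =>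
    hαβ ▸ (not_lt.1 ((hmem i).not.1 hi)).lt_of_ne (hne i)
  have hpF : localProj I lam1 b x = p := funext fun i => by
    rw [localProj_eq_mul_max hbpos hapos hin fun i hi => (hout i hi).le, hp, ← hcK, ← hαβ]
  have hev := eventuallyEq_localProj hP h0.le hb hbpos hapos hin hout
  refine ⟨hev.differentiableAt_iff.2 (differentiableAt_localProj hapos), fun y i => ?_⟩
  rw [hev.fderiv_eq, fderiv_localProj_apply hb hbpos hapos, hpF]
  rfl

theorem stmt_18 {n : ℕ} (lam1 lam2 : ℝ)
    (h0 : 0 < lam2) (h1 : lam2 < lam1) (h2 : lam1 < Real.sqrt n * lam2)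
    (x : Fin n → ℝ) (hx : ∀ i, 0 ≤ x i) (hxD : x ∉ Dset n lam1 lam2)
    (P : (Fin n → ℝ) → (Fin n → ℝ))
    (hP : ∀ y, P y ∈ Dset n lam1 lam2 ∧
      ∀ z ∈ Dset n lam1 lam2, l2 (fun i => P y i - y i) ≤ l2 (fun i => z i - y i))
    (p : Fin n → ℝ) (hpx : P x = p)
    (huniq : ∀ q ∈ Dset n lam1 lam2,
      (∀ z ∈ Dset n lam1 lam2, l2 (fun i => q i - x i) ≤ l2 (fun i => z i - x i)) → q = p)
    (α : ℝ)
    (hα : ∀ i, p i = lam2 * max (x i - α) 0 / l2 (fun j => max (x j - α) 0))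
    (hne : ∀ i, x i ≠ α)
    (I : Finset (Fin n)) (hI : I = Finset.univ.filter (fun i => 0 < p i))
    (d : ℕ) (hd : d = I.card)
    (a b : ℝ)
    (ha : a = d * (∑ i ∈ I, (x i) ^ 2) - (∑ i ∈ I, x i) ^ 2) (hapos : 0 < a)
    (hb : b = d * lam2 ^ 2 - lam1 ^ 2) (hbpos : 0 < b) :
    DifferentiableAt ℝ P x ∧
    ∀ y : Fin n → ℝ, ∀ i : Fin n,
      fderiv ℝ P x y i =
        if i ∈ I then
          Real.sqrt (b / a) * y i -
            (1 / Real.sqrt (a * b)) *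
              (lam2 ^ 2 * (∑ j ∈ I, y j) + d * (p i * ∑ j ∈ I, p j * y j)
                - lam1 * ((∑ j ∈ I, p j * y j) + p i * (∑ j ∈ I, y j)))
        else 0 :=
  stmt_18_general lam1 lam2 h0 x P hP p hpx α hα hne I hI d hd a b ha hapos hb hbpos
end

section
/- Let x ∈ ℝ_{≥0}^n have at least two distinct entries and suppose the auxiliary function Ψ has a zero α* in [0, x_{2nd-max}). Then there exist unique bracketing numbers x_j < x_k — either x_j = 0 and x_k = x_min, or x_j, x_k are consecutive distinct entries of x — such that α* ∈ [x_j, x_k), Ψ(x_j) ≥ 0, and Ψ(x_k) < 0. -/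
open Finset

lemma key_ineq {n : ℕ} (x : Fin n → ℝ) (s t : ℝ) (hst : s ≤ t) :
    ((univ.filter (fun i => t < x i)).card : ℝ) * (t - s) *
        (∑ i ∈ univ.filter (fun i => ¬ t < x i), max (x i - s) 0) *
        (∑ i, (max (x i - t) 0)^2)
      + (∑ i, max (x i - t) 0)^2 * (∑ i, (max (x i - s) 0)^2)
      ≤ (∑ i, max (x i - s) 0)^2 * (∑ i, (max (x i - t) 0)^2) := by
  classical
  set S := univ.filter (fun i => t < x i) with hS
  set T := univ.filter (fun i => ¬ t < x i) with hT
  set δ := t - s with hδ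
  have hδ0 : 0 ≤ δ := by simp only [hδ]; linarith
  set C := ∑ i ∈ S, (x i - t) with hC
  set D2 := ∑ i ∈ S, (x i - t)^2 with hD2
  set E := ∑ i ∈ T, max (x i - s) 0 with hE
  set F := ∑ i ∈ T, (max (x i - s) 0)^2 with hF
  set m := (S.card : ℝ) with hm
  have hmemS : ∀ i ∈ S, t < x i := by intro i hi; simp only [hS, mem_filter] at hi; exact hi.2
  have hmemT : ∀ i ∈ T, x i ≤ t := by
    intro i hi; simp only [hT, mem_filter] at hi; exact le_of_not_gt hi.2
  have split : ∀ f : Fin n → ℝ, ∑ i, f i = ∑ i ∈ S, f i + ∑ i ∈ T, f i :=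
    fun f => (Finset.sum_filter_add_sum_filter_not univ (fun i => t < x i) f).symm
  have e1 : (∑ i, max (x i - t) 0) = C := by
    rw [split]
    have h1 : ∑ i ∈ S, max (x i - t) 0 = C :=
      Finset.sum_congr rfl (fun i hi => max_eq_left (by linarith [hmemS i hi]))
    have h2 : ∑ i ∈ T, max (x i - t) 0 = 0 :=
      Finset.sum_eq_zero (fun i hi => max_eq_right (by linarith [hmemT i hi]))
    rw [h1, h2, add_zero]
  have e2 : (∑ i, (max (x i - t) 0)^2) = D2 := by
    rw [split]
    have h1 : ∑ i ∈ S, (max (x i - t) 0)^2 = D2 :=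
      Finset.sum_congr rfl (fun i hi => by
        rw [max_eq_left (by linarith [hmemS i hi] : (0:ℝ) ≤ x i - t)])
    have h2 : ∑ i ∈ T, (max (x i - t) 0)^2 = 0 :=
      Finset.sum_eq_zero (fun i hi => by
        rw [max_eq_right (by linarith [hmemT i hi] : x i - t ≤ 0)]; ring)
    rw [h1, h2, add_zero]
  have e3 : (∑ i, max (x i - s) 0) = C + m * δ + E := by
    rw [split]
    have h1 : ∑ i ∈ S, max (x i - s) 0 = C + m * δ := by
      have : ∀ i ∈ S, max (x i - s) 0 = (x i - t) + δ := fun i hi => by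
        rw [max_eq_left (by linarith [hmemS i hi] : (0:ℝ) ≤ x i - s)]
        simp only [hδ]; ring
      rw [Finset.sum_congr rfl this, Finset.sum_add_distrib, Finset.sum_const, nsmul_eq_mul, hC, hm]
    rw [h1, hE]
  have e4 : (∑ i, (max (x i - s) 0)^2) = D2 + 2*δ*C + m*δ^2 + F := by
    rw [split]
    have h1 : ∑ i ∈ S, (max (x i - s) 0)^2 = D2 + 2*δ*C + m*δ^2 := by
      have : ∀ i ∈ S, (max (x i - s) 0)^2 = (x i - t)^2 + 2*δ*(x i - t) + δ^2 := fun i hi => by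
        rw [max_eq_left (by linarith [hmemS i hi] : (0:ℝ) ≤ x i - s)]
        have hxi : x i - s = (x i - t) + δ := by simp only [hδ]; ring
        rw [hxi]; ring
      rw [Finset.sum_congr rfl this, Finset.sum_add_distrib, Finset.sum_add_distrib,
        Finset.sum_const, nsmul_eq_mul, ← Finset.mul_sum, hC, hD2, hm]
    rw [h1, hF]
  have hC0 : 0 ≤ C := Finset.sum_nonneg (fun i hi => by linarith [hmemS i hi])
  have hD20 : 0 ≤ D2 := Finset.sum_nonneg (fun i _ => sq_nonneg _)
  have hE0 : 0 ≤ E := Finset.sum_nonneg (fun i _ => le_max_right _ _)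
  have hF0 : 0 ≤ F := Finset.sum_nonneg (fun i _ => sq_nonneg _)
  have hm0 : 0 ≤ m := by positivity
  have hCS : C^2 ≤ m * D2 := by
    rw [hC, hD2, hm]
    exact_mod_cast sq_sum_le_card_mul_sum_sq (s := S) (f := fun i => x i - t)
  have hFE : F ≤ δ * E := by
    rw [hF, hE, Finset.mul_sum]
    refine Finset.sum_le_sum (fun i hi => ?_)
    have h1 : max (x i - s) 0 ≤ δ := max_le (by linarith [hmemT i hi]) hδ0
    have h2 : (0:ℝ) ≤ max (x i - s) 0 := le_max_right _ _
    nlinarith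
  rw [e1, e2, e3, e4]
  nlinarith [mul_le_mul_of_nonneg_right hCS (show (0:ℝ) ≤ 2*δ*C + m*δ^2 by positivity),
    mul_le_mul_of_nonneg_right hCS hF0,
    mul_le_mul_of_nonneg_left hFE (mul_nonneg hm0 hD20),
    mul_nonneg (mul_nonneg hD20 hE0) hE0, mul_nonneg (mul_nonneg hD20 hC0) hE0]
lemma l1_max {n : ℕ} (x : Fin n → ℝ) (s : ℝ) :
    l1 (fun i => max (x i - s) 0) = ∑ i, max (x i - s) 0 := by
  unfold l1
  exact Finset.sum_congr rfl (fun i _ => abs_of_nonneg (le_max_right _ _))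

lemma ratio_mono {n : ℕ} (x : Fin n → ℝ) (s t : ℝ) (hst : s ≤ t) (hw : ∃ i, t < x i) :
    l1 (fun i => max (x i - t) 0) / l2 (fun i => max (x i - t) 0)
      ≤ l1 (fun i => max (x i - s) 0) / l2 (fun i => max (x i - s) 0) := by
  classical
  set A := ∑ i, max (x i - s) 0 with hA
  set B2 := ∑ i, (max (x i - s) 0)^2 with hB2
  set C := ∑ i, max (x i - t) 0 with hC
  set D2 := ∑ i, (max (x i - t) 0)^2 with hD2
  obtain ⟨i0, hi0⟩ := hw
  have hD2pos : 0 < D2 := by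
    apply Finset.sum_pos' (fun i _ => sq_nonneg _)
    refine ⟨i0, Finset.mem_univ _, ?_⟩
    have h : 0 < max (x i0 - t) 0 := lt_of_lt_of_le (by linarith) (le_max_left _ _)
    positivity
  have hB2D2 : D2 ≤ B2 := by
    apply Finset.sum_le_sum (fun i _ => ?_)
    have h1 : max (x i - t) 0 ≤ max (x i - s) 0 := max_le_max (by linarith) le_rfl
    have h2 : (0:ℝ) ≤ max (x i - t) 0 := le_max_right _ _
    nlinarith
  have hB2pos : 0 < B2 := lt_of_lt_of_le hD2pos hB2D2
  have hA0 : 0 ≤ A := Finset.sum_nonneg (fun i _ => le_max_right _ _)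
  have hC0 : 0 ≤ C := Finset.sum_nonneg (fun i _ => le_max_right _ _)
  have hkey : C^2 * B2 ≤ A^2 * D2 := by
    have := key_ineq x s t hst
    have hnn : 0 ≤ ((Finset.univ.filter (fun i => t < x i)).card : ℝ) * (t - s) *
        (∑ i ∈ Finset.univ.filter (fun i => ¬ t < x i), max (x i - s) 0) *
        (∑ i, (max (x i - t) 0)^2) := by
      have hE : 0 ≤ ∑ i ∈ Finset.univ.filter (fun i => ¬ t < x i), max (x i - s) 0 :=
        Finset.sum_nonneg (fun i _ => le_max_right _ _)
      have : (0:ℝ) ≤ t - s := by linarith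
      positivity
    rw [← hA, ← hB2, ← hC, ← hD2] at this
    linarith
  rw [l1_max, l1_max]
  unfold l2
  rw [← hA, ← hB2, ← hC, ← hD2]
  rw [div_le_div_iff₀ (Real.sqrt_pos.mpr hD2pos) (Real.sqrt_pos.mpr hB2pos)]
  have e1 : C * Real.sqrt B2 = Real.sqrt (C^2 * B2) := by
    rw [Real.sqrt_mul (sq_nonneg C), Real.sqrt_sq hC0]
  have e2 : A * Real.sqrt D2 = Real.sqrt (A^2 * D2) := by
    rw [Real.sqrt_mul (sq_nonneg A), Real.sqrt_sq hA0]
  rw [e1, e2]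
  exact Real.sqrt_le_sqrt hkey

lemma ratio_strict {n : ℕ} (x : Fin n → ℝ) (s t : ℝ) (hst : s < t) (hw : ∃ i, t < x i)
    (hE : ∃ i, s < x i ∧ x i ≤ t) :
    l1 (fun i => max (x i - t) 0) / l2 (fun i => max (x i - t) 0)
      < l1 (fun i => max (x i - s) 0) / l2 (fun i => max (x i - s) 0) := by
  classical
  set A := ∑ i, max (x i - s) 0 with hA
  set B2 := ∑ i, (max (x i - s) 0)^2 with hB2
  set C := ∑ i, max (x i - t) 0 with hC
  set D2 := ∑ i, (max (x i - t) 0)^2 with hD2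
  obtain ⟨i0, hi0⟩ := hw
  obtain ⟨i1, hi1a, hi1b⟩ := hE
  have hD2pos : 0 < D2 := by
    apply Finset.sum_pos' (fun i _ => sq_nonneg _)
    refine ⟨i0, Finset.mem_univ _, ?_⟩
    have h : 0 < max (x i0 - t) 0 := lt_of_lt_of_le (by linarith) (le_max_left _ _)
    positivity
  have hB2D2 : D2 ≤ B2 := by
    apply Finset.sum_le_sum (fun i _ => ?_)
    have h1 : max (x i - t) 0 ≤ max (x i - s) 0 := max_le_max (by linarith) le_rfl
    have h2 : (0:ℝ) ≤ max (x i - t) 0 := le_max_right _ _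
    nlinarith
  have hB2pos : 0 < B2 := lt_of_lt_of_le hD2pos hB2D2
  have hA0 : 0 ≤ A := Finset.sum_nonneg (fun i _ => le_max_right _ _)
  have hC0 : 0 ≤ C := Finset.sum_nonneg (fun i _ => le_max_right _ _)
  have hkey : C^2 * B2 < A^2 * D2 := by
    have hk := key_ineq x s t (le_of_lt hst)
    rw [← hA, ← hB2, ← hC, ← hD2] at hk
    have hmpos : (1:ℝ) ≤ ((Finset.univ.filter (fun i => t < x i)).card : ℝ) := by
      have : (Finset.univ.filter (fun i => t < x i)).Nonempty :=
        ⟨i0, by simp [hi0]⟩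
      exact_mod_cast Finset.card_pos.mpr this
    have hEpos : 0 < ∑ i ∈ Finset.univ.filter (fun i => ¬ t < x i), max (x i - s) 0 := by
      apply Finset.sum_pos' (fun i _ => le_max_right _ _)
      refine ⟨i1, by simp only [Finset.mem_filter, Finset.mem_univ, true_and, not_lt]; exact hi1b, ?_⟩
      have : 0 < x i1 - s := by linarith
      rw [max_eq_left (le_of_lt this)]; exact this
    have hδ : 0 < t - s := by linarith
    have hprod : 0 < (((Finset.univ.filter (fun i => t < x i)).card : ℝ) * (t - s) *
        (∑ i ∈ Finset.univ.filter (fun i => ¬ t < x i), max (x i - s) 0)) * D2 := by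
      apply mul_pos (mul_pos (mul_pos (by linarith) hδ) hEpos) hD2pos
    linarith
  rw [l1_max, l1_max]
  unfold l2
  rw [← hA, ← hB2, ← hC, ← hD2]
  rw [div_lt_div_iff₀ (Real.sqrt_pos.mpr hD2pos) (Real.sqrt_pos.mpr hB2pos)]
  have e1 : C * Real.sqrt B2 = Real.sqrt (C^2 * B2) := by
    rw [Real.sqrt_mul (sq_nonneg C), Real.sqrt_sq hC0]
  have e2 : A * Real.sqrt D2 = Real.sqrt (A^2 * D2) := by
    rw [Real.sqrt_mul (sq_nonneg A), Real.sqrt_sq hA0]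
  rw [e1, e2]
  exact Real.sqrt_lt_sqrt (by positivity) hkey

lemma Psi_mono {n : ℕ} (x : Fin n → ℝ) (lam1 lam2 s t : ℝ) (hst : s ≤ t)
    (hw : ∃ i, t < x i) : Psi x lam1 lam2 t ≤ Psi x lam1 lam2 s :=
  sub_le_sub_right (ratio_mono x s t hst hw) _

lemma Psi_strict {n : ℕ} (x : Fin n → ℝ) (lam1 lam2 s t : ℝ) (hst : s < t)
    (hw : ∃ i, t < x i) (hE : ∃ i, s < x i ∧ x i ≤ t) :
    Psi x lam1 lam2 t < Psi x lam1 lam2 s :=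
  sub_lt_sub_right (ratio_strict x s t hst hw hE) _

theorem stmt_19 {n : ℕ} (x : Fin n → ℝ) (hx : ∀ i, 0 ≤ x i)
    (hdistinct : ∃ i j, x i ≠ x j)
    (lam1 lam2 : ℝ) (h0 : 0 < lam2) (h1 : lam2 < lam1) (h2 : lam1 < Real.sqrt n * lam2)
    (hratio : lam1 / lam2 < l1 x / l2 x)
    (xmax x2 xmin : ℝ) (hub : ∀ i, x i ≤ xmax) (hmaxmem : ∃ i, x i = xmax)
    (h2mem : ∃ i, x i = x2) (h2lt : x2 < xmax) (h2ub : ∀ i, x i ≠ xmax → x i ≤ x2)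
    (hminmem : ∃ i, x i = xmin) (hminlb : ∀ i, xmin ≤ x i)
    (a : ℝ) (ha : a ∈ Set.Ico 0 x2) (hzero : Psi x lam1 lam2 a = 0) :
    ∃! jk : ℝ × ℝ,
      jk.1 < jk.2 ∧
      ((jk.1 = 0 ∧ jk.2 = xmin) ∨
        ((∃ i, x i = jk.1) ∧ (∃ i, x i = jk.2) ∧
          ∀ i, ¬ (jk.1 < x i ∧ x i < jk.2))) ∧
      a ∈ Set.Ico jk.1 jk.2 ∧
      0 ≤ Psi x lam1 lam2 jk.1 ∧ Psi x lam1 lam2 jk.2 < 0 := by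
  obtain ⟨ha0, hax2⟩ := ha
  obtain ⟨i2, hi2⟩ := h2mem
  obtain ⟨imax, himax⟩ := hmaxmem
  obtain ⟨imin, himin⟩ := hminmem
  have hminx2 : xmin ≤ x2 := hi2 ▸ hminlb i2
  have hwa : ∃ i, a < x i := ⟨i2, by rw [hi2]; exact hax2⟩
  -- uniqueness
  have huniq : ∀ p q : ℝ × ℝ,
      (p.1 < p.2 ∧
        ((p.1 = 0 ∧ p.2 = xmin) ∨
          ((∃ i, x i = p.1) ∧ (∃ i, x i = p.2) ∧ ∀ i, ¬ (p.1 < x i ∧ x i < p.2))) ∧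
        a ∈ Set.Ico p.1 p.2 ∧
        0 ≤ Psi x lam1 lam2 p.1 ∧ Psi x lam1 lam2 p.2 < 0) →
      (q.1 < q.2 ∧
        ((q.1 = 0 ∧ q.2 = xmin) ∨
          ((∃ i, x i = q.1) ∧ (∃ i, x i = q.2) ∧ ∀ i, ¬ (q.1 < x i ∧ x i < q.2))) ∧
        a ∈ Set.Ico q.1 q.2 ∧
        0 ≤ Psi x lam1 lam2 q.1 ∧ Psi x lam1 lam2 q.2 < 0) → p = q := by
    rintro ⟨p1, p2⟩ ⟨q1, q2⟩ ⟨hplt, hpd, hpm, -, -⟩ ⟨hqlt, hqd, hqm, -, -⟩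
    dsimp only at hplt hpd hpm hqlt hqd hqm ⊢
    obtain ⟨hpa1, hpa2⟩ := Set.mem_Ico.mp hpm
    obtain ⟨hqa1, hqa2⟩ := Set.mem_Ico.mp hqm
    simp only [Prod.mk.injEq]
    rcases hpd with ⟨hp10, hp2m⟩ | ⟨⟨ip1, hip1⟩, ⟨ip2, hip2⟩, hpno⟩ <;>
      rcases hqd with ⟨hq10, hq2m⟩ | ⟨⟨iq1, hiq1⟩, ⟨iq2, hiq2⟩, hqno⟩
    · exact ⟨by rw [hp10, hq10], by rw [hp2m, hq2m]⟩
    · exfalso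
      have h1 := hminlb iq1
      rw [hiq1] at h1
      rw [hp2m] at hpa2
      linarith
    · exfalso
      have h1 := hminlb ip1
      rw [hip1] at h1
      rw [hq2m] at hqa2
      linarith
    · have h1 : ¬ p1 < q1 := fun h => hpno iq1 (by rw [hiq1]; exact ⟨h, lt_of_le_of_lt hqa1 hpa2⟩)
      have h2 : ¬ q1 < p1 := fun h => hqno ip1 (by rw [hip1]; exact ⟨h, lt_of_le_of_lt hpa1 hqa2⟩)
      have e1 : p1 = q1 := le_antisymm (not_lt.mp h2) (not_lt.mp h1)
      have h3 : ¬ p2 < q2 := fun h => hqno ip2 (by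
        rw [hip2]
        exact ⟨lt_of_le_of_lt (e1 ▸ hpa1) hpa2, h⟩)
      have h4 : ¬ q2 < p2 := fun h => hpno iq2 (by
        rw [hiq2]
        exact ⟨lt_of_le_of_lt (e1 ▸ hqa1) hqa2, h⟩)
      exact ⟨e1, le_antisymm (not_lt.mp h4) (not_lt.mp h3)⟩
  rcases lt_or_ge a xmin with hc | hc
  · -- pair (0, xmin)
    have hP : ((0:ℝ), xmin).1 < ((0:ℝ), xmin).2 ∧
        ((((0:ℝ), xmin).1 = 0 ∧ ((0:ℝ), xmin).2 = xmin) ∨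
          ((∃ i, x i = ((0:ℝ), xmin).1) ∧ (∃ i, x i = ((0:ℝ), xmin).2) ∧
            ∀ i, ¬ (((0:ℝ), xmin).1 < x i ∧ x i < ((0:ℝ), xmin).2))) ∧
        a ∈ Set.Ico ((0:ℝ), xmin).1 ((0:ℝ), xmin).2 ∧
        0 ≤ Psi x lam1 lam2 ((0:ℝ), xmin).1 ∧ Psi x lam1 lam2 ((0:ℝ), xmin).2 < 0 := by
      dsimp only
      refine ⟨lt_of_le_of_lt ha0 hc, Or.inl ⟨rfl, rfl⟩, Set.mem_Ico.mpr ⟨ha0, hc⟩, ?_, ?_⟩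
      · have hx0 : (fun i => max (x i - 0) 0) = x :=
          funext (fun i => by rw [sub_zero]; exact max_eq_left (hx i))
        have he : Psi x lam1 lam2 0 = l1 x / l2 x - lam1 / lam2 := by
          unfold Psi; rw [hx0]
        rw [he]
        linarith
      · have hwm : ∃ i, xmin < x i := ⟨imax, by rw [himax]; linarith⟩
        have hEw : ∃ i, a < x i ∧ x i ≤ xmin := ⟨imin, by rw [himin]; exact ⟨hc, le_rfl⟩⟩
        have := Psi_strict x lam1 lam2 a xmin hc hwm hEw
        linarith [hzero ▸ this]
    exact ⟨((0:ℝ), xmin), hP, fun q hq => huniq q ((0:ℝ), xmin) hq hP⟩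
  · -- pair (x ij, x ik)
    have hne1 : (univ.filter (fun i => x i ≤ a)).Nonempty :=
      ⟨imin, by simp only [mem_filter, mem_univ, true_and]; rw [himin]; exact hc⟩
    obtain ⟨ij, hijm, hijmax⟩ := Finset.exists_max_image _ x hne1
    have hne2 : (univ.filter (fun i => a < x i)).Nonempty :=
      ⟨i2, by simp only [mem_filter, mem_univ, true_and]; rw [hi2]; exact hax2⟩
    obtain ⟨ik, hikm, hikmin⟩ := Finset.exists_min_image _ x hne2
    have hja : x ij ≤ a := (mem_filter.mp hijm).2
    have hak : a < x ik := (mem_filter.mp hikm).2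
    have hkx2 : x ik ≤ x2 := by
      have := hikmin i2 (by simp only [mem_filter, mem_univ, true_and]; rw [hi2]; exact hax2)
      rw [hi2] at this; exact this
    have hP : (x ij, x ik).1 < (x ij, x ik).2 ∧
        (((x ij, x ik).1 = 0 ∧ (x ij, x ik).2 = xmin) ∨
          ((∃ i, x i = (x ij, x ik).1) ∧ (∃ i, x i = (x ij, x ik).2) ∧
            ∀ i, ¬ ((x ij, x ik).1 < x i ∧ x i < (x ij, x ik).2))) ∧
        a ∈ Set.Ico (x ij, x ik).1 (x ij, x ik).2 ∧
        0 ≤ Psi x lam1 lam2 (x ij, x ik).1 ∧ Psi x lam1 lam2 (x ij, x ik).2 < 0 := by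
      dsimp only
      refine ⟨lt_of_le_of_lt hja hak, Or.inr ⟨⟨ij, rfl⟩, ⟨ik, rfl⟩, ?_⟩,
        Set.mem_Ico.mpr ⟨hja, hak⟩, ?_, ?_⟩
      · rintro i ⟨hgt, hlt⟩
        rcases le_or_gt (x i) a with h | h
        · exact absurd (hijmax i (by simp only [mem_filter, mem_univ, true_and]; exact h))
            (not_le.mpr hgt)
        · exact absurd (hikmin i (by simp only [mem_filter, mem_univ, true_and]; exact h))
            (not_le.mpr hlt)
      · have := Psi_mono x lam1 lam2 (x ij) a hja hwa
        linarith [hzero ▸ this]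
      · have hwm : ∃ i, x ik < x i := ⟨imax, by rw [himax]; linarith⟩
        have hEw : ∃ i, a < x i ∧ x i ≤ x ik := ⟨ik, hak, le_rfl⟩
        have := Psi_strict x lam1 lam2 a (x ik) hak hwm hEw
        linarith [hzero ▸ this]
    exact ⟨(x ij, x ik), hP, fun q hq => huniq q (x ij, x ik) hq hP⟩
end
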